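/- Let m ≥ 7 with m ≡ 3 (mod 4), N = 3^m - 1, and v = (3^m - 1)/2 + 3^{(m-1)/2} - 1. Then for every integer i with 0 ≤ i ≤ (3^{(m-1)/2} + 1)/4, the base-3 digit sum of (v(1+2i) mod N) is congruent to 3 modulo 4; in fact it equals m for each such i. -/
import Mathlib
lemma sum3_rec (n : ℕ) : (Nat.digits 3 n).sum = n % 3 + (Nat.digits 3 (n/3)).sum := by
  rcases n with _ | n
  · simp
  · rw [Nat.digits_def' (by norm_num : 1 < 3) (Nat.succ_pos n)]; simp

lemma sum3_one : (Nat.digits 3 1).sum = 1 := by rw [sum3_rec]; simp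
lemma sum3_two : (Nat.digits 3 2).sum = 2 := by rw [sum3_rec]; simp

lemma sum3_split (k : ℕ) : ∀ a r : ℕ, r < 3^k →
    (Nat.digits 3 (a * 3^k + r)).sum = (Nat.digits 3 a).sum + (Nat.digits 3 r).sum := by
  induction k with
  | zero =>
    intro a r hr
    interval_cases r
    simp
  | succ k ih =>
    intro a r hr
    have h3 : a * 3^(k+1) + r = 3*(a*3^k) + r := by ring
    rw [h3, sum3_rec, Nat.mul_add_mod, Nat.mul_add_div (by norm_num : 0 < 3)]
    have hr3 : r / 3 < 3^k := by
      have h4 : r < 3^k * 3 := by rw [pow_succ] at hr; exact hr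
      omega
    rw [ih a (r/3) hr3]
    conv_rhs => rw [sum3_rec r]
    omega

lemma sum3_compl (k : ℕ) : ∀ x, x < 3^k →
    (Nat.digits 3 x).sum + (Nat.digits 3 (3^k - 1 - x)).sum = 2*k := by
  induction k with
  | zero =>
    intro x hx
    interval_cases x
    simp
  | succ k ih =>
    intro x hx
    have h3 : (3:ℕ)^(k+1) = 3 * 3^k := by ring
    have hq : x / 3 < 3^k := by rw [h3] at hx; omega
    have hy : 3^(k+1) - 1 - x = (2 - x % 3) + 3 * (3^k - 1 - x/3) := by rw [h3]; omega
    rw [sum3_rec x, hy, sum3_rec ((2 - x % 3) + 3 * (3^k - 1 - x/3))]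
    have e1 : ((2 - x % 3) + 3 * (3^k - 1 - x/3)) % 3 = 2 - x % 3 := by omega
    have e2 : ((2 - x % 3) + 3 * (3^k - 1 - x/3)) / 3 = 3^k - 1 - x/3 := by omega
    rw [e1, e2]
    have := ih (x/3) hq
    omega

theorem digit_sum_v_mult_mod_three' (m : ℕ) (hm : 7 ≤ m) (hm4 : m % 4 = 3) :
    ∀ i : ℕ, i ≤ (3 ^ ((m - 1) / 2) + 1) / 4 →
      (Nat.digits 3 ((((3 ^ m - 1) / 2 + 3 ^ ((m - 1) / 2) - 1) * (1 + 2 * i))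
        % (3 ^ m - 1))).sum % 4 = 3 ∧
      (Nat.digits 3 ((((3 ^ m - 1) / 2 + 3 ^ ((m - 1) / 2) - 1) * (1 + 2 * i))
        % (3 ^ m - 1))).sum = m := by
  intro i hi
  obtain ⟨h, rfl⟩ : ∃ h, m = 2*h+1 := ⟨(m-1)/2, by omega⟩
  have hh3 : 3 ≤ h := by omega
  have hhodd : h % 2 = 1 := by omega
  have hsimp : (2*h+1-1)/2 = h := by omega
  rw [hsimp] at hi ⊢
  -- facts about X = 3^h
  set X := (3:ℕ)^h with hX
  have hX4 : X % 4 = 3 := by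
    obtain ⟨k, rfl⟩ : ∃ k, h = 2*k+1 := ⟨h/2, by omega⟩
    have : X = 9^k * 3 := by rw [hX, pow_succ, pow_mul]; norm_num
    rw [this, Nat.mul_mod, Nat.pow_mod]
    norm_num
  have hXge : 27 ≤ X := by
    calc (27:ℕ) = 3^3 := by norm_num
    _ ≤ 3^h := Nat.pow_le_pow_right (by norm_num) hh3
  obtain ⟨B, hB⟩ : ∃ B, X = 2*B+1 := ⟨(X-1)/2, by omega⟩
  have hBodd : B % 2 = 1 := by omega
  have hBge : 13 ≤ B := by omega
  -- R
  set R := (X+B)*X + B with hRdef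
  have hm3 : (3:ℕ)^(2*h+1) = 3*(X*X) := by
    rw [pow_succ, two_mul, pow_add, ← hX]; ring
  have key : 3*(X*X) = 2*R + 1 := by rw [hRdef, hB]; ring
  have hN : (3:ℕ)^(2*h+1) = 2*R + 1 := hm3.trans key
  have e1 : ((3:ℕ)^(2*h+1) - 1)/2 = R := by omega
  have e2 : ((3:ℕ)^(2*h+1) - 1) = 2*R := by omega
  rw [e1, e2]
  have hv : R + X - 1 = R + 2*B := by omega
  rw [hv]
  -- bound on t = 1+2i
  have hi' : 1 + 2*i ≤ B + 2 := by omega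
  have hRR : R = 6*(B*B) + 6*B + 1 := by rw [hRdef, hB]; ring
  have hlt : R + 2*B*(1+2*i) < 2*R := by
    have h1 : 2*B*(1+2*i) ≤ 2*B*(B+2) := Nat.mul_le_mul_left _ hi'
    have h2 : 2*B*(B+2) = 2*(B*B) + 4*B := by ring
    omega
  have hw : (R + 2*B) * (1+2*i) = (2*R)*i + (R + 2*B*(1+2*i)) := by ring
  rw [hw, Nat.mul_add_mod, Nat.mod_eq_of_lt hlt]
  suffices hs : (Nat.digits 3 (R + 2*B*(1+2*i))).sum = 2*h+1 by
    exact ⟨by omega, hs⟩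
  by_cases hc : 1 + 2*i ≤ B
  · -- case t ≤ B
    obtain ⟨u, hu⟩ : ∃ u, B = (1+2*i) + u := ⟨B - (1+2*i), by omega⟩
    have hw1 : R + 2*B*(1+2*i) = (X + B + (1+2*i)) * 3^h + u := by
      rw [← hX, hRdef, hB, hu]; ring
    have hu3 : u < 3^h := by rw [← hX]; omega
    rw [hw1, sum3_split h _ u hu3]
    have hsplit2 : X + B + (1+2*i) = 1 * 3^h + (B + (1+2*i)) := by
      rw [one_mul, ← hX]; ring
    have hBt3 : B + (1+2*i) < 3^h := by rw [← hX]; omega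
    rw [hsplit2, sum3_split h 1 _ hBt3, sum3_one]
    have hcompl := sum3_compl h u hu3
    have hcc : 3^h - 1 - u = B + (1+2*i) := by rw [← hX]; omega
    rw [hcc] at hcompl
    omega
  · -- case t = B + 2
    have ht2 : 1 + 2*i = B + 2 := by omega
    have hpow : (3:ℕ)^(2*h) = X*X := by rw [two_mul, pow_add, ← hX]
    have hXX : X*X = 4*(B*B) + 4*B + 1 := by rw [hB]; ring
    have hBB' : 2*B*(B+2) = 2*(B*B) + 4*B := by ring
    have hw2 : R + 2*B*(1+2*i) = 2 * 3^(2*h) + (X - 2) := by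
      rw [ht2, hpow]; omega
    rw [hw2]
    have hX2lt : X - 2 < 3^(2*h) := by
      rw [hpow]
      have : X ≤ X*X := Nat.le_mul_of_pos_left X (by omega)
      omega
    rw [sum3_split (2*h) 2 _ hX2lt, sum3_two]
    have h13 : (1:ℕ) < 3^h := by rw [← hX]; omega
    have hcompl := sum3_compl h 1 h13
    have hcc : (3:ℕ)^h - 1 - 1 = X - 2 := by rw [← hX]; omega
    rw [hcc, sum3_one] at hcompl
    omega
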